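/- In the BSR reduction analysis, let a feasible solution materialize m_ALG set versions (no element versions materialized, each element retrieved via an edge from a set version covering it), and let H be the set of non-materialized 'hopped' set versions a_i through which some element b_j is retrieved. Then |H| ≤ m_ALG - m_OPT, and hence the family S = {A_i : a_i materialized} ∪ H is a set cover of size at most 2·m_ALG - m_OPT. -/

import Mathlib

/-!
Every non-materialized version costs at least one unit of retrieval, and a version whose
parent is itself non-materialized costs at least two. Summing, a feasible solution pays
`(m + n - m_ALG) + |B|`, where `B` is the set of versions retrieved through a non-materialized
parent; against the budget `m - m_OPT + n` this gives `|B| ≤ m_ALG - m_OPT`. Each hopped set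
version is the parent of some element in `B`, so `|H| ≤ |B|`. Since an element's parent must be
a set version containing it, the materialized and hopped sets cover everything.
-/

open Finset

/-- Edges of the set-cover reduction graph: set versions `a_i` (left), element
versions `b_j` (right); symmetric unit-cost deltas between distinct set versions,
and between `a_i` and `b_j` whenever element `o_j ∈ A_i` (i.e. `mem i j`). -/
def covEdge {m n : ℕ} (mem : Fin m → Fin n → Prop) :
    Sum (Fin m) (Fin n) → Sum (Fin m) (Fin n) → Prop
  | Sum.inl i, Sum.inl i' => i ≠ i'
  | Sum.inl i, Sum.inr j => mem i j
  | Sum.inr j, Sum.inl i => mem i j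
  | Sum.inr _, Sum.inr _ => False

theorem covEdge_inr_iff {m n : ℕ} {mem : Fin m → Fin n → Prop} {u : Fin m ⊕ Fin n}
    {j : Fin n} : covEdge mem u (.inr j) ↔ ∃ i, u = .inl i ∧ mem i j := by
  cases u <;> simp [covEdge]

section RetrievalCost

variable {V : Type*} [Fintype V] [DecidableEq V]

def indirectlyRetrieved (M : Finset V) (par : V → V) : Finset V :=
  Mᶜ.filter fun v => par v ∉ M

theorem card_compl_add_card_indirectlyRetrieved_le_sum {M : Finset V} {par : V → V}
    {Rv : V → ℕ} (hstep : ∀ v ∉ M, Rv v = Rv (par v) + 1) :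
    Mᶜ.card + (indirectlyRetrieved M par).card ≤ ∑ v, Rv v := by
  have hcost : ∀ v ∈ Mᶜ, 1 + (if par v ∉ M then 1 else 0) ≤ Rv v := by
    intro v hv
    rw [mem_compl] at hv
    have hv1 := hstep v hv
    by_cases hpv : par v ∈ M
    · simp only [hpv, not_true_eq_false, if_false]
      omega
    · have := hstep _ hpv
      simp only [hpv, not_false_eq_true, if_true]
      omega
  calc Mᶜ.card + (indirectlyRetrieved M par).card
      = ∑ v ∈ Mᶜ, (1 + if par v ∉ M then 1 else 0) := by
        rw [sum_add_distrib, card_eq_sum_ones, indirectlyRetrieved, card_filter]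
    _ ≤ ∑ v ∈ Mᶜ, Rv v := sum_le_sum hcost
    _ ≤ ∑ v, Rv v := sum_le_univ_sum_of_nonneg fun _ => Nat.zero_le _

end RetrievalCost

theorem bsr_hopped_sets_bound_general (m n : ℕ) (mem : Fin m → Fin n → Prop)
    (mOPT mALG : ℕ)
    (hmOPT : mOPT =
      sInf {k | ∃ C : Finset (Fin m), C.card = k ∧ ∀ j : Fin n, ∃ i ∈ C, mem i j})
    (Msets : Finset (Fin m)) (hmALG : mALG = Msets.card)
    (par : Sum (Fin m) (Fin n) → Sum (Fin m) (Fin n))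
    (Rv : Sum (Fin m) (Fin n) → ℕ)
    (hstep : ∀ v ∉ Msets.image Sum.inl, covEdge mem (par v) v ∧ Rv v = Rv (par v) + 1)
    (hfeas : ∑ v, Rv v ≤ m - mOPT + n) :
    let H : Finset (Fin m) := Finset.univ.filter
      (fun i : Fin m => i ∉ Msets ∧ ∃ j : Fin n, par (Sum.inr j) = Sum.inl i)
    H.card ≤ mALG - mOPT ∧
    (∀ j : Fin n, ∃ i ∈ Msets ∪ H, mem i j) ∧
    (Msets ∪ H).card ≤ 2 * mALG - mOPT := by
  intro H
  set M : Finset (Fin m ⊕ Fin n) := Msets.image Sum.inl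
  have hinr : ∀ j : Fin n, Sum.inr j ∉ M := by simp [M]
  have hcover : ∀ j : Fin n, ∃ i ∈ Msets ∪ H, mem i j := by
    intro j
    obtain ⟨i, hpar, hij⟩ := covEdge_inr_iff.mp (hstep _ (hinr j)).1
    by_cases hi : i ∈ Msets
    · exact ⟨i, mem_union_left _ hi, hij⟩
    · exact ⟨i, mem_union_right _ (mem_filter.mpr ⟨mem_univ _, hi, j, hpar⟩), hij⟩
  have hHB : H.card ≤ (indirectlyRetrieved M par).card := by
    have hsub : H.map .inl ⊆ (indirectlyRetrieved M par).image par := by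
      intro v hv
      obtain ⟨i, hiH, rfl⟩ := mem_map.mp hv
      obtain ⟨-, hi, j, hpar⟩ := mem_filter.mp hiH
      refine mem_image.mpr ⟨.inr j, mem_filter.mpr ⟨mem_compl.mpr (hinr j), ?_⟩, hpar⟩
      simpa [hpar, M] using hi
    simpa using (card_le_card hsub).trans card_image_le
  have hcompl : Mᶜ.card = m + n - Msets.card := by
    simp [M, card_compl, card_image_of_injective _ Sum.inl_injective]
  have hcost := card_compl_add_card_indirectlyRetrieved_le_sum (fun v hv => (hstep v hv).2)
  have hMm : Msets.card ≤ m := by simpa using card_le_univ Msets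
  have hOPT : mOPT ≤ (Msets ∪ H).card := hmOPT ▸ Nat.sInf_le ⟨_, rfl, hcover⟩
  have hunion := card_union_le Msets H
  refine ⟨?_, hcover, ?_⟩ <;> omega

/-- BSR reduction analysis: a feasible solution under total retrieval constraint
`R = m - m_OPT + n` materializes only set versions (`M = {a_i : i ∈ Msets}`,
`m_ALG = |Msets|`) and retrieves each element via an edge from a set version
covering it.  Let `H` be the set of non-materialized "hopped" set versions `a_i`
through which some element is retrieved.  Then `|H| ≤ m_ALG - m_OPT`, and the
family `S = {A_i : a_i materialized} ∪ H` is a set cover of size at most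
`2·m_ALG - m_OPT`. -/
theorem bsr_hopped_sets_bound (m n : ℕ) (mem : Fin m → Fin n → Prop)
    (mOPT mALG : ℕ)
    (hmOPT : mOPT =
      sInf {k | ∃ C : Finset (Fin m), C.card = k ∧ ∀ j : Fin n, ∃ i ∈ C, mem i j})
    (Msets : Finset (Fin m)) (hmALG : mALG = Msets.card)
    (par : Sum (Fin m) (Fin n) → Sum (Fin m) (Fin n))
    (Rv : Sum (Fin m) (Fin n) → ℕ)
    (h0 : ∀ v ∈ Msets.image Sum.inl, Rv v = 0)
    (hstep : ∀ v ∉ Msets.image Sum.inl, covEdge mem (par v) v ∧ Rv v = Rv (par v) + 1)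
    (hpar : ∀ j : Fin n, ∃ i : Fin m, par (Sum.inr j) = Sum.inl i ∧ mem i j)
    (hfeas : ∑ v, Rv v ≤ m - mOPT + n) :
    let H : Finset (Fin m) := Finset.univ.filter
      (fun i : Fin m => i ∉ Msets ∧ ∃ j : Fin n, par (Sum.inr j) = Sum.inl i)
    H.card ≤ mALG - mOPT ∧
    (∀ j : Fin n, ∃ i ∈ Msets ∪ H, mem i j) ∧
    (Msets ∪ H).card ≤ 2 * mALG - mOPT :=
  bsr_hopped_sets_bound_general m n mem mOPT mALG hmOPT Msets hmALG par Rv hstep hfeas
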